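/- arXiv:2603.12602 — 3 statements merged into one kernel-verified Lean document; each statement's English description precedes it below -/
import Mathlib

section
/- Let A be an n×n real matrix that is strictly diagonally dominant by rows, with row dominance margin m_i := |A_{i,i}| − Σ_{j≠i} |A_{i,j}| > 0 for each i. Then A is invertible and ‖A^{-1}‖_∞ ≤ 1 / min_i m_i, where ‖·‖_∞ is the matrix norm induced by the sup-norm on vectors (maximum absolute row sum norm of the inverse). -/
/-!
If `|x k|` is the largest coordinate of `x`, diagonal dominance of row `k` gives
`m_k |x_k| ≤ |(A x)_k|`, hence `(min_i m_i) ‖x‖_∞ ≤ ‖A x‖_∞`. Applied to `x = A⁻¹ y` this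
bounds the operator norm of `A⁻¹` on `ℓ^∞`, which dominates every absolute row sum of `A⁻¹`.
-/

open Matrix Finset

namespace Matrix

variable {n R : Type*} [Fintype n]

def rowMargin [DecidableEq n] [CommRing R] [LinearOrder R] (A : Matrix n n R) (i : n) : R :=
  |A i i| - ∑ j ∈ univ.erase i, |A i j|

theorem rowMargin_mul_abs_le_abs_mulVec [DecidableEq n] [CommRing R] [LinearOrder R]
    [IsStrictOrderedRing R]
    (A : Matrix n n R) (x : n → R) {k : n} (hk : ∀ j, |x j| ≤ |x k|) :
    A.rowMargin k * |x k| ≤ |(A *ᵥ x) k| := by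
  have hsplit : (A *ᵥ x) k = A k k * x k + ∑ j ∈ univ.erase k, A k j * x j := by
    rw [mulVec, dotProduct, ← add_sum_erase _ _ (mem_univ k)]
  have hoff : |∑ j ∈ univ.erase k, A k j * x j| ≤ (∑ j ∈ univ.erase k, |A k j|) * |x k| :=
    calc |∑ j ∈ univ.erase k, A k j * x j|
        ≤ ∑ j ∈ univ.erase k, |A k j| * |x j| := by
          simpa only [abs_mul] using abs_sum_le_sum_abs (fun j => A k j * x j) _
      _ ≤ ∑ j ∈ univ.erase k, |A k j| * |x k| :=
          sum_le_sum fun j _ => mul_le_mul_of_nonneg_left (hk j) (abs_nonneg _)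
      _ = (∑ j ∈ univ.erase k, |A k j|) * |x k| := (sum_mul _ _ _).symm
  calc A.rowMargin k * |x k|
      = |A k k * x k| - (∑ j ∈ univ.erase k, |A k j|) * |x k| := by
        rw [rowMargin, abs_mul, sub_mul]
    _ ≤ |A k k * x k| - |∑ j ∈ univ.erase k, A k j * x j| := sub_le_sub_left hoff _
    _ ≤ |(A *ᵥ x) k| := hsplit ▸ abs_sub_abs_le_abs_add _ _

theorem mul_norm_le_norm_mulVec_of_le_rowMargin [DecidableEq n] (A : Matrix n n ℝ) {μ : ℝ}
    (hμ : ∀ i, μ ≤ A.rowMargin i) (x : n → ℝ) : μ * ‖x‖ ≤ ‖A *ᵥ x‖ := by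
  rcases isEmpty_or_nonempty n with _ | _
  · simp only [Subsingleton.elim x 0, norm_zero, mul_zero, norm_nonneg]
  obtain ⟨k, -, hk⟩ := exists_max_image univ (fun j => |x j|) univ_nonempty
  have hk : ∀ j, |x j| ≤ |x k| := fun j => hk j (mem_univ j)
  have hnorm : ‖x‖ = |x k| :=
    le_antisymm ((pi_norm_le_iff_of_nonneg (abs_nonneg _)).2 hk) (norm_le_pi_norm x k)
  calc μ * ‖x‖ ≤ A.rowMargin k * |x k| :=
        hnorm ▸ mul_le_mul_of_nonneg_right (hμ k) (norm_nonneg x)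
    _ ≤ |(A *ᵥ x) k| := A.rowMargin_mul_abs_le_abs_mulVec x hk
    _ ≤ ‖A *ᵥ x‖ := norm_le_pi_norm (A *ᵥ x) k

theorem isUnit_of_rowMargin_pos [DecidableEq n] (A : Matrix n n ℝ)
    (h : ∀ i, 0 < A.rowMargin i) : IsUnit A :=
  (isUnit_iff_isUnit_det A).2 <| isUnit_iff_ne_zero.2 <| det_ne_zero_of_sum_row_lt_diag
    fun k => by simpa only [rowMargin, sub_pos, Real.norm_eq_abs] using h k

section LinftyOpNorm

open scoped Matrix.Norms.Operator

theorem sum_abs_le_linfty_opNorm {m : Type*} [Fintype m] (B : Matrix m n ℝ) (i : m) :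
    ∑ j, |B i j| ≤ ‖B‖ := by
  rw [linfty_opNorm_def]
  calc ∑ j, |B i j| = ((∑ j, ‖B i j‖₊ : NNReal) : ℝ) := by
        push_cast [coe_nnnorm, Real.norm_eq_abs]; rfl
    _ ≤ _ := NNReal.coe_le_coe.2 (le_sup (f := fun i => ∑ j, ‖B i j‖₊) (mem_univ i))

theorem linfty_opNorm_le_of_norm_mulVec_le {m : Type*} [Fintype m] (B : Matrix m n ℝ) {M : ℝ}
    (hM : 0 ≤ M) (h : ∀ x, ‖B *ᵥ x‖ ≤ M * ‖x‖) : ‖B‖ ≤ M := by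
  rw [linfty_opNorm_eq_opNorm]
  exact ContinuousLinearMap.opNorm_le_bound _ hM h

theorem linfty_opNorm_inv_le_of_le_rowMargin [DecidableEq n] (A : Matrix n n ℝ) {μ : ℝ}
    (hμ0 : 0 < μ) (hμ : ∀ i, μ ≤ A.rowMargin i) : ‖A⁻¹‖ ≤ 1 / μ := by
  have hA : IsUnit A.det :=
    (isUnit_iff_isUnit_det A).1 (A.isUnit_of_rowMargin_pos fun i => hμ0.trans_le (hμ i))
  refine linfty_opNorm_le_of_norm_mulVec_le _ (one_div_nonneg.2 hμ0.le) fun y => ?_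
  have hy : A *ᵥ A⁻¹ *ᵥ y = y := by rw [mulVec_mulVec, mul_nonsing_inv A hA, one_mulVec]
  rw [one_div_mul_eq_div, le_div_iff₀' hμ0]
  simpa only [hy] using A.mul_norm_le_norm_mulVec_of_le_rowMargin hμ (A⁻¹ *ᵥ y)

theorem sum_abs_inv_le_of_le_rowMargin [DecidableEq n] (A : Matrix n n ℝ) {μ : ℝ}
    (hμ0 : 0 < μ) (hμ : ∀ i, μ ≤ A.rowMargin i) (i : n) : ∑ j, |A⁻¹ i j| ≤ 1 / μ :=
  (sum_abs_le_linfty_opNorm A⁻¹ i).trans (linfty_opNorm_inv_le_of_le_rowMargin A hμ0 hμ)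

end LinftyOpNorm

end Matrix

/-- Varah's bound: a row-strictly-diagonally-dominant real matrix `A` with row
dominance margins `m_i = |A_{ii}| − Σ_{j≠i} |A_{ij}| > 0` is invertible, and the
maximum absolute row sum norm of its inverse is at most `1 / min_i m_i`. -/
theorem varah_bound {n : Type*} [Fintype n] [DecidableEq n] [Nonempty n]
    (A : Matrix n n ℝ) (m : n → ℝ)
    (hm : ∀ i, m i = |A i i| - ∑ j ∈ Finset.univ.erase i, |A i j|)
    (hpos : ∀ i, 0 < m i) :
    IsUnit A ∧
    ∀ i, (∑ j, |A⁻¹ i j|) ≤ 1 / Finset.univ.inf' Finset.univ_nonempty m := by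
  obtain rfl : m = A.rowMargin := funext hm
  refine ⟨A.isUnit_of_rowMargin_pos hpos, fun i => ?_⟩
  obtain ⟨k, -, hk⟩ := exists_mem_eq_inf' univ_nonempty A.rowMargin
  exact A.sum_abs_inv_le_of_le_rowMargin (hk ▸ hpos k) (fun j => inf'_le _ (mem_univ j)) i
end

section
/- Let k, b > 0 and 0 < δ < b, and let f_{k,b}(x) = b^k x^{k-1} e^{-bx}/Γ(k) be the Gamma density. Then for all x > 0, e^{δx} f_{k,b}(x) = (b/(b-δ))^k · f_{k, b-δ}(x). Consequently ∫₀^∞ e^{δx} |∂_b f_{k,b}(x)| dx ≤ (b/(b-δ))^k · (kδ/(b(b-δ)) + √k/(b-δ)). -/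
/-!
Multiplying by `e^{δx}` only lowers the rate of the exponential factor, which gives the tilt
identity, and `∂_b f_{k,b}(x) = (k/b - x) f_{k,b}(x)`. Hence the weighted integral equals
`(b/(b-δ))^k E|k/b - Y|` for `Y ∼ Γ(k, b-δ)`, and `E|Y - c| ≤ |E Y - c| + E|Y - E Y|`.
The last term is at most the standard deviation `σ = √k/(b-δ)`: integrating the pointwise
bound `|t| ≤ (t²/σ + σ)/2` gives `(Var Y/σ + σ)/2 = σ`.
-/

open MeasureTheory ProbabilityTheory Set Real

lemma abs_le_sq_div_add_div_two (t : ℝ) {s : ℝ} (hs : 0 < s) : |t| ≤ (t ^ 2 / s + s) / 2 := by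
  rw [div_add' _ _ _ hs.ne', div_div, le_div_iff₀ (by positivity)]
  nlinarith [sq_nonneg (|t| - s), sq_abs t]

namespace ProbabilityTheory

variable {a r x : ℝ}

lemma integrableOn_gammaPDFReal (ha : 0 < a) (hr : 0 < r) :
    IntegrableOn (gammaPDFReal a r) (Ioi 0) := by
  refine ⟨(measurable_gammaPDFReal a r).aestronglyMeasurable.restrict, ?_⟩
  rw [hasFiniteIntegral_iff_ofReal (ae_of_all _ (gammaPDFReal_nonneg ha hr))]
  calc ∫⁻ x in Ioi 0, ENNReal.ofReal (gammaPDFReal a r x)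
      ≤ ∫⁻ x, gammaPDF a r x := setLIntegral_le_lintegral _ _
    _ < ⊤ := by simp [lintegral_gammaPDF_eq_one ha hr]

lemma setIntegral_gammaPDFReal_Ioi (ha : 0 < a) (hr : 0 < r) :
    ∫ x in Ioi 0, gammaPDFReal a r x = 1 := by
  rw [setIntegral_congr_fun (g := fun x => r ^ a / Gamma a * (x ^ (a - 1) * exp (-(r * x))))
    measurableSet_Ioi fun x (hx : 0 < x) => by simp [gammaPDFReal, hx.le, mul_assoc],
    integral_const_mul, integral_rpow_mul_exp_neg_mul_Ioi ha hr, div_rpow zero_le_one hr.le,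
    one_rpow]
  have := (Gamma_pos_of_pos ha).ne'
  have := (rpow_pos_of_pos hr a).ne'
  field_simp

lemma mul_gammaPDFReal (ha : 0 < a) (hr : r ≠ 0) (hx : 0 < x) :
    x * gammaPDFReal a r x = a / r * gammaPDFReal (a + 1) r x := by
  simp only [gammaPDFReal, if_pos hx.le, Gamma_add_one ha.ne', add_sub_cancel_right]
  rw [rpow_add_one hr, rpow_sub_one hx.ne']
  have := (Gamma_pos_of_pos ha).ne'
  field_simp

lemma integrableOn_mul_gammaPDFReal (ha : 0 < a) (hr : 0 < r) :
    IntegrableOn (fun x => x * gammaPDFReal a r x) (Ioi 0) :=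
  IntegrableOn.congr_fun ((integrableOn_gammaPDFReal (by linarith) hr).const_mul (a / r))
    (fun _ hx => (mul_gammaPDFReal ha hr.ne' hx).symm) measurableSet_Ioi

lemma setIntegral_mul_gammaPDFReal_Ioi (ha : 0 < a) (hr : 0 < r) :
    ∫ x in Ioi 0, x * gammaPDFReal a r x = a / r := by
  rw [setIntegral_congr_fun measurableSet_Ioi fun _ hx => mul_gammaPDFReal ha hr.ne' hx,
    integral_const_mul, setIntegral_gammaPDFReal_Ioi (by linarith) hr, mul_one]

lemma integrableOn_sq_mul_gammaPDFReal (ha : 0 < a) (hr : 0 < r) :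
    IntegrableOn (fun x => x * (x * gammaPDFReal a r x)) (Ioi 0) :=
  IntegrableOn.congr_fun
    ((integrableOn_mul_gammaPDFReal (a := a + 1) (by linarith) hr).const_mul (a / r))
    (fun x hx => by rw [mul_gammaPDFReal ha hr.ne' hx, mul_left_comm]) measurableSet_Ioi

lemma setIntegral_sq_mul_gammaPDFReal_Ioi (ha : 0 < a) (hr : 0 < r) :
    ∫ x in Ioi 0, x * (x * gammaPDFReal a r x) = a * (a + 1) / r ^ 2 := by
  rw [setIntegral_congr_fun measurableSet_Ioi fun x hx => by
      rw [mul_gammaPDFReal ha hr.ne' hx, mul_left_comm],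
    integral_const_mul, setIntegral_mul_gammaPDFReal_Ioi (by linarith) hr]
  ring

lemma integrableOn_sub_sq_mul_gammaPDFReal (ha : 0 < a) (hr : 0 < r) (c : ℝ) :
    IntegrableOn (fun x => (x - c) ^ 2 * gammaPDFReal a r x) (Ioi 0) :=
  IntegrableOn.congr_fun (((integrableOn_sq_mul_gammaPDFReal ha hr).sub
      ((integrableOn_mul_gammaPDFReal ha hr).const_mul (2 * c))).add
      ((integrableOn_gammaPDFReal ha hr).const_mul (c ^ 2)))
    (fun x _ => by simp only [Pi.add_apply, Pi.sub_apply]; ring) measurableSet_Ioi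

lemma setIntegral_sub_sq_mul_gammaPDFReal_Ioi (ha : 0 < a) (hr : 0 < r) :
    ∫ x in Ioi 0, (x - a / r) ^ 2 * gammaPDFReal a r x = a / r ^ 2 := by
  have h2 := integrableOn_sq_mul_gammaPDFReal ha hr
  have h1 := (integrableOn_mul_gammaPDFReal ha hr).const_mul (2 * (a / r))
  have h0 := (integrableOn_gammaPDFReal ha hr).const_mul ((a / r) ^ 2)
  have h21 : IntegrableOn (fun x => x * (x * gammaPDFReal a r x)
      - 2 * (a / r) * (x * gammaPDFReal a r x)) (Ioi 0) := h2.sub h1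
  rw [setIntegral_congr_fun (g := fun x => x * (x * gammaPDFReal a r x)
      - 2 * (a / r) * (x * gammaPDFReal a r x) + (a / r) ^ 2 * gammaPDFReal a r x)
      measurableSet_Ioi fun x _ => by ring,
    integral_add h21 h0, integral_sub h2 h1, integral_const_mul, integral_const_mul,
    setIntegral_sq_mul_gammaPDFReal_Ioi ha hr, setIntegral_mul_gammaPDFReal_Ioi ha hr,
    setIntegral_gammaPDFReal_Ioi ha hr]
  field_simp
  ring

lemma setIntegral_abs_sub_mul_gammaPDFReal_Ioi_le (ha : 0 < a) (hr : 0 < r) (c : ℝ) :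
    ∫ x in Ioi 0, |c - x| * gammaPDFReal a r x ≤ |a / r - c| + √a / r := by
  set s := √a / r
  have hs : 0 < s := by positivity
  have hs2 : s ^ 2 = a / r ^ 2 := by rw [div_pow, sq_sqrt ha.le]
  have hpoint : ∀ x, |c - x| ≤ (|a / r - c| + s / 2) + 1 / (2 * s) * (x - a / r) ^ 2 := by
    intro x
    have h1 := abs_sub_le c (a / r) x
    have h2 := abs_le_sq_div_add_div_two (x - a / r) hs
    rw [abs_sub_comm c (a / r), abs_sub_comm (a / r) x] at h1
    have : (x - a / r) ^ 2 / s / 2 = 1 / (2 * s) * (x - a / r) ^ 2 := by ring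
    linarith
  calc ∫ x in Ioi 0, |c - x| * gammaPDFReal a r x
      ≤ ∫ x in Ioi 0, ((|a / r - c| + s / 2) * gammaPDFReal a r x
          + 1 / (2 * s) * ((x - a / r) ^ 2 * gammaPDFReal a r x)) := by
        refine integral_mono_of_nonneg (ae_of_all _ fun x => ?_) ?_ (ae_of_all _ fun x => ?_)
        · exact mul_nonneg (abs_nonneg _) (gammaPDFReal_nonneg ha hr x)
        · exact ((integrableOn_gammaPDFReal ha hr).const_mul _).add
            ((integrableOn_sub_sq_mul_gammaPDFReal ha hr _).const_mul _)
        · have := mul_le_mul_of_nonneg_right (hpoint x) (gammaPDFReal_nonneg ha hr x)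
          linarith
    _ = |a / r - c| + s := by
        rw [integral_add ((integrableOn_gammaPDFReal ha hr).const_mul _)
            ((integrableOn_sub_sq_mul_gammaPDFReal ha hr _).const_mul _),
          integral_const_mul, integral_const_mul, setIntegral_gammaPDFReal_Ioi ha hr,
          setIntegral_sub_sq_mul_gammaPDFReal_Ioi ha hr, ← hs2]
        field_simp
        ring

lemma hasDerivAt_gammaPDFReal_rate (hr : 0 < r) (hx : 0 ≤ x) :
    HasDerivAt (fun r => gammaPDFReal a r x) ((a / r - x) * gammaPDFReal a r x) r := by
  simp only [gammaPDFReal, if_pos hx]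
  refine ((((hasDerivAt_rpow_const (p := a) (Or.inl hr.ne')).div_const (Gamma a)).mul_const
    (x ^ (a - 1))).mul ((hasDerivAt_mul_const (x := r) x).fun_neg.exp)).congr_deriv ?_
  rw [rpow_sub_one hr.ne']
  field_simp
  ring

lemma exp_mul_gammaPDFReal {δ : ℝ} (hr : 0 ≤ r) (hδr : δ < r) (x : ℝ) :
    exp (δ * x) * gammaPDFReal a r x = (r / (r - δ)) ^ a * gammaPDFReal a (r - δ) x := by
  have hrδ : 0 < r - δ := sub_pos.mpr hδr
  simp only [gammaPDFReal]
  split_ifs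
  · rw [div_rpow hr hrδ.le, show -((r - δ) * x) = δ * x + -(r * x) by ring, exp_add]
    have := (rpow_pos_of_pos hrδ a).ne'
    field_simp
  · simp

end ProbabilityTheory

/-- Esscher tilt identity for the Gamma density,
`e^{δx} f_{k,b}(x) = (b/(b−δ))^k f_{k,b−δ}(x)`, and the resulting weighted `L¹`
bound on the `b`-derivative of the density:
`∫ e^{δx} |∂_b f_{k,b}(x)| dx ≤ (b/(b−δ))^k (kδ/(b(b−δ)) + √k/(b−δ))`. -/
theorem gamma_tilt_and_b_derivative_bound (k b δ : ℝ)
    (hk : 0 < k) (hδ : 0 < δ) (hδb : δ < b) :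
    (∀ x : ℝ, 0 < x →
      Real.exp (δ * x) * gammaPDFReal k b x
        = (b / (b - δ)) ^ k * gammaPDFReal k (b - δ) x) ∧
    (∫ x in Set.Ioi (0 : ℝ),
        Real.exp (δ * x) * |deriv (fun b' => gammaPDFReal k b' x) b|)
      ≤ (b / (b - δ)) ^ k * (k * δ / (b * (b - δ)) + Real.sqrt k / (b - δ)) := by
  have hb : 0 < b := hδ.trans hδb
  have hbδ : 0 < b - δ := sub_pos.mpr hδb
  have htilt := exp_mul_gammaPDFReal (a := k) hb.le hδb
  refine ⟨fun x _ => htilt x, ?_⟩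
  have hmean : k / (b - δ) - k / b = k * δ / (b * (b - δ)) := by
    field_simp
    ring
  calc ∫ x in Ioi 0, exp (δ * x) * |deriv (fun b' => gammaPDFReal k b' x) b|
      = ∫ x in Ioi 0, (b / (b - δ)) ^ k * (|k / b - x| * gammaPDFReal k (b - δ) x) := by
        refine setIntegral_congr_fun measurableSet_Ioi fun x (hx : 0 < x) => ?_
        rw [(hasDerivAt_gammaPDFReal_rate hb hx.le).deriv, abs_mul,
          abs_of_nonneg (gammaPDFReal_nonneg hk hb x), mul_left_comm, htilt, mul_left_comm]
    _ ≤ (b / (b - δ)) ^ k * (|k / (b - δ) - k / b| + √k / (b - δ)) := by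
        rw [integral_const_mul]
        gcongr
        exact setIntegral_abs_sub_mul_gammaPDFReal_Ioi_le hk hbδ _
    _ = (b / (b - δ)) ^ k * (k * δ / (b * (b - δ)) + √k / (b - δ)) := by
        rw [hmean, abs_of_pos (by positivity)]
end

section
/- Let F ∈ C²([λ_{j-1}, λ_{j+1}]) and let d_{j-1} = (F(λ_j)−F(λ_{j-1}))/h_{j-1}, d_j = (F(λ_{j+1})−F(λ_j))/h_j be the secant slopes, with h = max(h_{j-1}, h_j). If d_{j-1}·d_j ≤ 0, then |F'(λ_j)| ≤ 2h·sup|F''|. Consequently, the PCHIP rule setting the nodal slope m_j = 0 in this non-monotone case satisfies |m_j − F'(λ_j)| ≤ 2h·sup|F''|. -/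
/-! By the mean value theorem both secant slopes are values of `F'` on `[λ_{j-1}, λ_{j+1}]`.
If they have opposite signs, Darboux's theorem (the image of an interval under a derivative is
an interval) gives a zero `γ` of `F'` there. Then `|F'(λ_j)| = |F'(λ_j) - F'(γ)| ≤ M |λ_j - γ|`
by the mean value inequality for `F'`, and `|λ_j - γ| ≤ h`. -/

open Set

section

variable {f f' f'' : ℝ → ℝ} {a b c M : ℝ}

theorem slope_mem_image_of_hasDerivWithinAt (hab : a < b)
    (hf : ∀ x ∈ Icc a b, HasDerivWithinAt f (f' x) (Icc a b) x) :
    (f b - f a) / (b - a) ∈ f' '' Icc a b := by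
  obtain ⟨e, he, hfe⟩ := exists_hasDerivAt_eq_slope f f' hab
    (fun x hx => (hf x hx).continuousWithinAt)
    (fun x hx => (hf x (Ioo_subset_Icc_self hx)).hasDerivAt (Icc_mem_nhds hx.1 hx.2))
  exact ⟨e, Ioo_subset_Icc_self he, hfe⟩

theorem exists_eq_zero_of_slope_mul_slope_nonpos (hab : a < b) (hbc : b < c)
    (hf : ∀ x ∈ Icc a c, HasDerivWithinAt f (f' x) (Icc a c) x)
    (hslope : (f b - f a) / (b - a) * ((f c - f b) / (c - b)) ≤ 0) :
    ∃ γ ∈ Icc a c, f' γ = 0 := by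
  have hab_sub : Icc a b ⊆ Icc a c := Icc_subset_Icc le_rfl hbc.le
  have hbc_sub : Icc b c ⊆ Icc a c := Icc_subset_Icc hab.le le_rfl
  have hd₀ := image_mono hab_sub <| slope_mem_image_of_hasDerivWithinAt hab
    fun x hx => (hf x (hab_sub hx)).mono hab_sub
  have hd₁ := image_mono hbc_sub <| slope_mem_image_of_hasDerivWithinAt hbc
    fun x hx => (hf x (hbc_sub hx)).mono hbc_sub
  have h0 : (0 : ℝ) ∈ uIcc ((f b - f a) / (b - a)) ((f c - f b) / (c - b)) := by
    rcases mul_nonpos_iff.mp hslope with ⟨h₀, h₁⟩ | ⟨h₀, h₁⟩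
    · exact mem_uIcc_of_ge h₁ h₀
    · exact mem_uIcc_of_le h₀ h₁
  exact (ordConnected_Icc.image_hasDerivWithinAt hf).uIcc_subset hd₀ hd₁ h0

theorem abs_sub_le_max_of_mem_Icc {y : ℝ} (hy : y ∈ Icc a c) :
    |b - y| ≤ max (b - a) (c - b) :=
  abs_sub_le_iff.2 ⟨le_max_of_le_left (by linarith [hy.1]), le_max_of_le_right (by linarith [hy.2])⟩

theorem abs_le_mul_max_of_slope_mul_slope_nonpos (hab : a < b) (hbc : b < c)
    (hf : ∀ x ∈ Icc a c, HasDerivWithinAt f (f' x) (Icc a c) x)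
    (hf' : ∀ x ∈ Icc a c, HasDerivWithinAt f' (f'' x) (Icc a c) x)
    (hM : ∀ x ∈ Icc a c, |f'' x| ≤ M)
    (hslope : (f b - f a) / (b - a) * ((f c - f b) / (c - b)) ≤ 0) :
    |f' b| ≤ M * max (b - a) (c - b) := by
  obtain ⟨γ, hγ, hf'γ⟩ := exists_eq_zero_of_slope_mul_slope_nonpos hab hbc hf hslope
  have hb : b ∈ Icc a c := ⟨hab.le, hbc.le⟩
  calc |f' b| = |f' b - f' γ| := by rw [hf'γ, sub_zero]
    _ ≤ M * |b - γ| := (convex_Icc a c).norm_image_sub_le_of_norm_hasDerivWithin_le hf' hM hγ hb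
    _ ≤ M * max (b - a) (c - b) :=
      mul_le_mul_of_nonneg_left (abs_sub_le_max_of_mem_Icc hγ) ((abs_nonneg _).trans (hM b hb))

end

/-- PCHIP non-monotone case: if the secant slopes `d_{j-1}, d_j` around `λ_j` have
product `≤ 0` and `F ∈ C²`, then `|F'(λ_j)| ≤ 2h·sup|F''|`; consequently the PCHIP
choice `m_j = 0` satisfies `|m_j − F'(λ_j)| ≤ 2h·sup|F''|`. -/
theorem pchip_nonmonotone_slope (x0 x1 x2 : ℝ) (h01 : x0 < x1) (h12 : x1 < x2)
    (F F' F'' : ℝ → ℝ) (M : ℝ)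
    (hd1 : ∀ x ∈ Icc x0 x2, HasDerivAt F (F' x) x)
    (hd2 : ∀ x ∈ Icc x0 x2, HasDerivAt F' (F'' x) x)
    (hM : ∀ x ∈ Icc x0 x2, |F'' x| ≤ M)
    (hsign : ((F x1 - F x0) / (x1 - x0)) * ((F x2 - F x1) / (x2 - x1)) ≤ 0) :
    |F' x1| ≤ 2 * max (x1 - x0) (x2 - x1) * M ∧
    |(0 : ℝ) - F' x1| ≤ 2 * max (x1 - x0) (x2 - x1) * M := by
  have hbound := abs_le_mul_max_of_slope_mul_slope_nonpos h01 h12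
    (fun x hx => (hd1 x hx).hasDerivWithinAt) (fun x hx => (hd2 x hx).hasDerivWithinAt) hM hsign
  have hM₀ : 0 ≤ M := (abs_nonneg _).trans (hM x1 ⟨h01.le, h12.le⟩)
  have hh₀ : 0 ≤ max (x1 - x0) (x2 - x1) := le_max_of_le_left (sub_nonneg.2 h01.le)
  have key : |F' x1| ≤ 2 * max (x1 - x0) (x2 - x1) * M := by nlinarith
  exact ⟨key, by rwa [zero_sub, abs_neg]⟩
end
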